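/- arXiv:2210.05981 — 2 statements merged into one kernel-verified Lean document; each statement's English description precedes it below -/
import Mathlib

section
/- (Corollary of Rudin's Lemma) Let L be a dcpo, let ℱ be a directed family of nonempty finite subsets of L, and let U ⊆ L be Scott open. If ⋂_{F∈ℱ} ↑F ⊆ U, then there exists F ∈ ℱ with ↑F ⊆ U. -/
open Set

universe u v

variable {L : Type u}

/-- The upper set `↑A = {y : ∃ a ∈ A, a ≤ y}`. -/
def upSet [Preorder L] (A : Set L) : Set L := {y | ∃ a ∈ A, a ≤ y}

/-- The lower set `↓A = {y : ∃ a ∈ A, y ≤ a}`. -/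
def downSet [Preorder L] (A : Set L) : Set L := {y | ∃ a ∈ A, y ≤ a}

/-- An ideal on `J`: a family of subsets closed under subsets and finite unions. -/
def IsIdeal {J : Type v} (I : Set (Set J)) : Prop :=
  (∀ A ∈ I, ∀ B : Set J, B ⊆ A → B ∈ I) ∧ ∀ A ∈ I, ∀ B ∈ I, A ∪ B ∈ I

/-- A (nonempty) directed family of nonempty finite subsets of `L`. -/
def DirectedFamily [Preorder L] (𝓕 : Set (Set L)) : Prop :=
  𝓕.Nonempty ∧ (∀ F ∈ 𝓕, F.Nonempty ∧ F.Finite) ∧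
    ∀ E ∈ 𝓕, ∀ F ∈ 𝓕, ∃ H ∈ 𝓕, upSet H ⊆ upSet E ∩ upSet F

/-- A dcpo: every nonempty directed subset has a supremum. -/
def IsDcpo (L : Type u) [PartialOrder L] : Prop :=
  ∀ D : Set L, D.Nonempty → DirectedOn (· ≤ ·) D → ∃ s, IsLUB D s

/-- A net index: a nonempty directed preordered set. -/
def IsNetIndex (J : Type v) [Preorder J] : Prop :=
  Nonempty J ∧ ∀ a b : J, ∃ c, a ≤ c ∧ b ≤ c

/-- The net `xj` GZS-converges (generalized ideal inf-limit) to `x` w.r.t. ideal `I`. -/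
def GZSConv [Preorder L] {J : Type v} (xj : J → L) (I : Set (Set J)) (x : L) : Prop :=
  ∃ 𝓕 : Set (Set L), DirectedFamily 𝓕 ∧ (⋂ F ∈ 𝓕, upSet F) ⊆ upSet {x} ∧
    ∀ F ∈ 𝓕, {j | xj j ∉ upSet F} ∈ I

/-- The net `xj` IS-converges (ideal inf-limit) to `x` w.r.t. ideal `I`. -/
def ISConv [Preorder L] {J : Type v} (xj : J → L) (I : Set (Set J)) (x : L) : Prop :=
  ∃ D : Set L, D.Nonempty ∧ DirectedOn (· ≤ ·) D ∧ (∃ s, IsLUB D s ∧ x ≤ s) ∧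
    ∀ d ∈ D, {j | xj j ∉ upSet {d}} ∈ I

/-- `G ≪ x` for a set `G`: every nonempty directed `D` with `x ≤ sup D` meets `↑G`. -/
def WayBelowSet [Preorder L] (G : Set L) (x : L) : Prop :=
  ∀ D : Set L, D.Nonempty → DirectedOn (· ≤ ·) D →
    ∀ s, IsLUB D s → x ≤ s → (D ∩ upSet G).Nonempty

/-- Scott open set. -/
def ScottOpen [Preorder L] (U : Set L) : Prop :=
  (∀ x ∈ U, ∀ y, x ≤ y → y ∈ U) ∧
    ∀ D : Set L, D.Nonempty → DirectedOn (· ≤ ·) D →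
      ∀ s, IsLUB D s → s ∈ U → (D ∩ U).Nonempty

/-- `fin(x)`: the nonempty finite subsets way below `x`. -/
def finOf [Preorder L] (x : L) : Set (Set L) :=
  {F | F.Nonempty ∧ F.Finite ∧ WayBelowSet F x}

/-- Quasicontinuous domain. -/
def QuasicontinuousDomain (L : Type u) [PartialOrder L] : Prop :=
  IsDcpo L ∧ ∀ x : L, DirectedFamily (finOf x) ∧ upSet {x} = ⋂ F ∈ finOf x, upSet F

/-- Ideal convergence of a net w.r.t. a topology `T`. -/
def IConv [Preorder L] {J : Type v} (T : TopologicalSpace L) (xj : J → L)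
    (I : Set (Set J)) (x : L) : Prop :=
  ∀ U : Set L, T.IsOpen U → x ∈ U → {j | xj j ∉ U} ∈ I

/-- The net `xj` GS-converges (generalized inf-limit) to `x`. -/
def GSConv [Preorder L] {J : Type v} [Preorder J] (xj : J → L) (x : L) : Prop :=
  ∃ 𝓕 : Set (Set L), DirectedFamily 𝓕 ∧ (⋂ F ∈ 𝓕, upSet F) ⊆ upSet {x} ∧
    ∀ F ∈ 𝓕, ∃ k : J, ∀ j : J, k ≤ j → xj j ∈ upSet F

/-- The generalized inf-limit topology `τ^{g-lim-inf}`. -/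
def tauGLimInf (L : Type u) [PartialOrder L] : Set (Set L) :=
  {U | ∀ (J : Type u) [Preorder J], IsNetIndex J →
      ∀ xj : J → L, ∀ x ∈ U, GSConv xj x → ∃ k : J, ∀ j : J, k ≤ j → xj j ∈ U}

/-- The generalized ideal inf-limit topology `τ^{g-I-lim-inf}`. -/
def tauGILimInf (L : Type u) [PartialOrder L] : Set (Set L) :=
  {U | ∀ (J : Type u) [Preorder J], IsNetIndex J →
      ∀ (xj : J → L) (I : Set (Set J)), IsIdeal I →
      ∀ x ∈ U, GZSConv xj I x → {j | xj j ∉ U} ∈ I}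

/-- `x = glim_GZ (x_j)`: generalized ideal eventual-lower-bound limit. -/
def GlimGZ [Preorder L] {J : Type v} (xj : J → L) (I : Set (Set J)) (x : L) : Prop :=
  GZSConv xj I x ∧
    ∀ F : Set L, F.Nonempty → F.Finite → {j | xj j ∉ upSet F} ∈ I → x ∈ upSet F

/-- The generalized ideal eventual-lower-bound limit topology `τ^{g-I}`. -/
def tauGIlb (L : Type u) [PartialOrder L] : Set (Set L) :=
  {U | ∀ (J : Type u) [Preorder J], IsNetIndex J →
      ∀ (xj : J → L) (I : Set (Set J)), IsIdeal I →
      ∀ x ∈ U, GlimGZ xj I x → {j | xj j ∉ U} ∈ I}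

/-- The Scott topology `σ(L)`. -/
def scottTop (L : Type u) [Preorder L] : TopologicalSpace L :=
  TopologicalSpace.generateFrom {U | ScottOpen U}

/-- The Lawson topology `λ(L) = σ(L) ∨ ω(L)`. -/
def lawsonTop (L : Type u) [Preorder L] : TopologicalSpace L :=
  TopologicalSpace.generateFrom ({U | ScottOpen U} ∪ {V | ∃ x : L, V = (upSet {x})ᶜ})

/-- Meet-continuity of a dcpo. -/
def MeetContinuous (L : Type u) [PartialOrder L] : Prop :=
  ∀ x : L, ∀ D : Set L, D.Nonempty → DirectedOn (· ≤ ·) D →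
    ∀ s, IsLUB D s → x ≤ s → x ∈ @closure L (scottTop L) (downSet {x} ∩ downSet D)

/-- Continuous domain: `⇓x` is nonempty, directed, with supremum `x`. -/
def ContinuousDomain (L : Type u) [PartialOrder L] : Prop :=
  IsDcpo L ∧ ∀ x : L, {y : L | WayBelowSet {y} x}.Nonempty ∧
    DirectedOn (· ≤ ·) {y : L | WayBelowSet {y} x} ∧ IsLUB {y : L | WayBelowSet {y} x} x

section RudinAux

private lemma mem_upSet_singleton [Preorder L] {a y : L} : y ∈ upSet {a} ↔ a ≤ y := by
  constructor
  · rintro ⟨b, hb, hby⟩; rwa [Set.mem_singleton_iff.mp hb] at hby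
  · intro h; exact ⟨a, rfl, h⟩

/-- **Rudin's Lemma.** -/
lemma rudin_lemma [PartialOrder L] (𝓕 : Set (Set L)) (h𝓕 : DirectedFamily 𝓕) :
    ∃ M : Set L, M.Nonempty ∧ M ⊆ ⋃₀ 𝓕 ∧ DirectedOn (· ≤ ·) M ∧
      ∀ F ∈ 𝓕, (M ∩ F).Nonempty := by
  obtain ⟨hne, hfin, hdir⟩ := h𝓕
  set S : Set (Set L) := {A | A ⊆ ⋃₀ 𝓕 ∧ (∀ F ∈ 𝓕, (A ∩ F).Nonempty) ∧
    ∀ F ∈ 𝓕, ∀ G ∈ 𝓕, upSet G ⊆ upSet F → A ∩ G ⊆ upSet (A ∩ F)} with hS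
  have hU : (⋃₀ 𝓕) ∈ S := by
    refine ⟨subset_rfl, fun F hF => ?_, fun F hF G hG hGF x hx => ?_⟩
    · obtain ⟨x, hx⟩ := (hfin F hF).1
      exact ⟨x, ⟨F, hF, hx⟩, hx⟩
    · obtain ⟨f, hf, hfx⟩ := hGF ⟨x, hx.2, le_refl x⟩
      exact ⟨f, ⟨⟨F, hF, hf⟩, hf⟩, hfx⟩
  -- Zorn: chains have lower bounds
  have hchain : ∀ c ⊆ S, IsChain (· ⊆ ·) c → c.Nonempty → ∃ lb ∈ S, ∀ s ∈ c, lb ⊆ s := by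
    intro c hcS hc hcne
    -- key: for each F, some member of c has minimal intersection with F
    have key : ∀ F ∈ 𝓕, ∃ A₀ ∈ c, ∀ B ∈ c, A₀ ∩ F ⊆ B ∩ F := by
      intro F hF
      have hfinim : ((fun B => B ∩ F) '' c).Finite := by
        apply Set.Finite.subset ((hfin F hF).2.finite_subsets)
        rintro _ ⟨B, _, rfl⟩
        exact Set.inter_subset_right
      obtain ⟨A₀, hA₀c, hmin⟩ : ∃ a ∈ c, ∀ a' ∈ c, a' ∩ F ⊆ a ∩ F → a ∩ F = a' ∩ F := by
        obtain ⟨a, ha, hm⟩ := Set.Finite.exists_minimalFor' (fun B => B ∩ F) c hfinim hcne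
        exact ⟨a, ha, fun a' ha' h => le_antisymm (hm ha' h) h⟩
      refine ⟨A₀, hA₀c, fun B hBc => ?_⟩
      rcases hc.total hA₀c hBc with h | h
      · exact fun x hx => ⟨h hx.1, hx.2⟩
      · have : B ∩ F ⊆ A₀ ∩ F := fun x hx => ⟨h hx.1, hx.2⟩
        rw [hmin B hBc this]
    obtain ⟨B₀, hB₀⟩ := hcne
    refine ⟨⋂₀ c, ⟨?_, fun F hF => ?_, fun F hF G hG hGF x hx => ?_⟩,
      fun s hs => Set.sInter_subset_of_mem hs⟩
    · exact (Set.sInter_subset_of_mem hB₀).trans (hcS hB₀).1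
    · obtain ⟨A₀, hA₀c, hA₀⟩ := key F hF
      obtain ⟨x, hx⟩ := (hcS hA₀c).2.1 F hF
      exact ⟨x, Set.mem_sInter.mpr fun B hB => (hA₀ B hB hx).1, hx.2⟩
    · obtain ⟨A₀, hA₀c, hA₀⟩ := key F hF
      have hxA₀ : x ∈ A₀ ∩ G := ⟨Set.mem_sInter.mp hx.1 A₀ hA₀c, hx.2⟩
      obtain ⟨f, hf, hfx⟩ := (hcS hA₀c).2.2 F hF G hG hGF hxA₀
      exact ⟨f, ⟨Set.mem_sInter.mpr fun B hB => (hA₀ B hB hf).1, hf.2⟩, hfx⟩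
  obtain ⟨M, -, hMmin⟩ := zorn_superset_nonempty S hchain (⋃₀ 𝓕) hU
  obtain ⟨hMsub, hMmeet, hMcomp⟩ := hMmin.prop
  -- Step 1: every element of M has some F with M ∩ F ⊆ ↑a
  have step1 : ∀ a ∈ M, ∃ F ∈ 𝓕, M ∩ F ⊆ upSet ({a} : Set L) := by
    intro a ha
    by_contra hcon
    push_neg at hcon
    have hA : (M \ upSet ({a} : Set L)) ∈ S := by
      refine ⟨(Set.diff_subset).trans hMsub, fun F hF => ?_, fun F hF G hG hGF x hx => ?_⟩
      · obtain ⟨x, hxMF, hxa⟩ := Set.not_subset.mp (hcon F hF)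
        exact ⟨x, ⟨hxMF.1, hxa⟩, hxMF.2⟩
      · obtain ⟨m, hmMF, hmx⟩ := hMcomp F hF G hG hGF ⟨hx.1.1, hx.2⟩
        have hma : m ∉ upSet ({a} : Set L) := by
          intro hma
          exact hx.1.2 (mem_upSet_singleton.mpr ((mem_upSet_singleton.mp hma).trans hmx))
        exact ⟨m, ⟨⟨hmMF.1, hma⟩, hmMF.2⟩, hmx⟩
    have := hMmin.2 hA Set.diff_subset
    exact (this ha).2 (mem_upSet_singleton.mpr (le_refl a))
  -- conclusion
  have hMdir : DirectedOn (· ≤ ·) M := by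
    intro a haM b hbM
    obtain ⟨Fa, hFa, hFa'⟩ := step1 a haM
    obtain ⟨Fb, hFb, hFb'⟩ := step1 b hbM
    obtain ⟨H, hH, hHsub⟩ := hdir Fa hFa Fb hFb
    obtain ⟨h, hhM, hhH⟩ := hMmeet H hH
    obtain ⟨ma, hma, hmah⟩ := hMcomp Fa hFa H hH (fun x hx => (hHsub hx).1) ⟨hhM, hhH⟩
    obtain ⟨mb, hmb, hmbh⟩ := hMcomp Fb hFb H hH (fun x hx => (hHsub hx).2) ⟨hhM, hhH⟩
    exact ⟨h, hhM, (mem_upSet_singleton.mp (hFa' hma)).trans hmah,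
      (mem_upSet_singleton.mp (hFb' hmb)).trans hmbh⟩
  obtain ⟨F₀, hF₀⟩ := hne
  obtain ⟨x, hx⟩ := hMmeet F₀ hF₀
  exact ⟨M, ⟨x, hx.1⟩, hMsub, hMdir, hMmeet⟩

end RudinAux

/-- **Corollary of Rudin's Lemma.** In a dcpo, if a directed family `𝓕` of nonempty finite
sets satisfies `⋂_{F ∈ 𝓕} ↑F ⊆ U` with `U` Scott open, then `↑F ⊆ U` for some `F ∈ 𝓕`. -/
theorem rudin_corollary {L : Type u} [PartialOrder L] (hL : IsDcpo L) (𝓕 : Set (Set L))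
    (h𝓕 : DirectedFamily 𝓕) (U : Set L) (hU : ScottOpen U)
    (h : (⋂ F ∈ 𝓕, upSet F) ⊆ U) :
    ∃ F ∈ 𝓕, upSet F ⊆ U := by
  by_contra hcon
  push_neg at hcon
  obtain ⟨hne, hfin, hdir⟩ := h𝓕
  -- each F has a point outside U
  have hFU : ∀ F ∈ 𝓕, (F \ U).Nonempty := by
    intro F hF
    obtain ⟨y, hyF, hyU⟩ := Set.not_subset.mp (hcon F hF)
    obtain ⟨f, hf, hfy⟩ := hyF
    refine ⟨f, hf, fun hfU => hyU (hU.1 f hfU y hfy)⟩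
  -- the directed family of the F \ U
  set 𝓕' : Set (Set L) := (fun F => F \ U) '' 𝓕 with h𝓕'
  have hup : ∀ F ∈ 𝓕, ∀ x, x ∈ upSet (F \ U) → x ∈ upSet F ∧ x ∉ upSet (∅ : Set L) ∨ True :=
    fun _ _ _ _ => Or.inr trivial
  have hdf : DirectedFamily 𝓕' := by
    refine ⟨hne.image _, ?_, ?_⟩
    · rintro _ ⟨F, hF, rfl⟩
      exact ⟨hFU F hF, ((hfin F hF).2).subset Set.diff_subset⟩
    · rintro _ ⟨E, hE, rfl⟩ _ ⟨F, hF, rfl⟩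
      obtain ⟨H, hH, hHsub⟩ := hdir E hE F hF
      refine ⟨H \ U, ⟨H, hH, rfl⟩, fun x hx => ?_⟩
      obtain ⟨g, ⟨hgH, hgU⟩, hgx⟩ := hx
      have hgE : g ∈ upSet E ∩ upSet F := hHsub ⟨g, hgH, le_refl g⟩
      obtain ⟨e, he, heg⟩ := hgE.1
      obtain ⟨f, hf, hfg⟩ := hgE.2
      have heU : e ∉ U := fun h' => hgU (hU.1 e h' g heg)
      have hfU : f ∉ U := fun h' => hgU (hU.1 f h' g hfg)
      exact ⟨⟨e, ⟨he, heU⟩, heg.trans hgx⟩, ⟨f, ⟨hf, hfU⟩, hfg.trans hgx⟩⟩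
  obtain ⟨M, hMne, hMsub, hMdir, hMmeet⟩ := rudin_lemma 𝓕' hdf
  have hMU : ∀ x ∈ M, x ∉ U := by
    intro x hx
    obtain ⟨_, ⟨F, _, rfl⟩, hxF⟩ := hMsub hx
    exact hxF.2
  obtain ⟨s, hs⟩ := hL M hMne hMdir
  have hsU : s ∈ U := by
    apply h
    apply Set.mem_iInter₂.mpr
    intro F hF
    obtain ⟨m, hmM, hmF⟩ := hMmeet (F \ U) ⟨F, hF, rfl⟩
    exact ⟨m, hmF.1, hs.1 hmM⟩
  obtain ⟨d, hdM, hdU⟩ := hU.2 M hMne hMdir s hs hsU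
  exact hMU d hdM hdU
end

section
/- (Proposition 5) Let L be a dcpo, G a nonempty finite subset of L, and x ∈ L. If for every nonempty directed preordered set J, every nontrivial ideal I on J, and every net (x_j)_{j∈J} in L, GZS-convergence of (x_j) to x with respect to I implies {j ∈ J : x_j ∉ ↑G} ∈ I, then G ≪ x. -/
/-!
Given a nonempty directed `D` with `x ≤ sup D`, apply the hypothesis to `D` itself, viewed as a
net indexed by `D`, with the ideal of sets avoided by a tail of `D` (dual to the filter
`atTop`). The singletons `{d}`, `d ∈ D`, form a directed family whose common upper set is the
set of upper bounds of `D`, which lies in `↑x`; and each `↑d` contains a tail. So the net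
GZS-converges to `x`, hence some tail, in particular some `d ∈ D`, lies in `↑G`.
-/

open Set

universe u v

variable {L : Type u}

theorem upSet_singleton [Preorder L] (a : L) : upSet {a} = Ici a := by
  ext y
  simp [upSet]

def dualIdeal {J : Type v} (f : Filter J) : Set (Set J) := {A | Aᶜ ∈ f}

theorem isIdeal_dualIdeal {J : Type v} (f : Filter J) : IsIdeal (dualIdeal f) :=
  ⟨fun _ hA _ hBA ↦ Filter.mem_of_superset hA (compl_subset_compl.2 hBA),
    fun A hA B hB ↦ by
      simpa only [dualIdeal, mem_ofPred_eq, compl_union] using Filter.inter_mem hA hB⟩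

theorem univ_notMem_dualIdeal {J : Type v} (f : Filter J) [f.NeBot] : univ ∉ dualIdeal f := by
  simp [dualIdeal]

theorem isNetIndex_of_isDirectedOrder (J : Type v) [Preorder J] [Nonempty J]
    [IsDirectedOrder J] : IsNetIndex J :=
  ⟨‹_›, exists_ge_ge⟩

theorem directedFamily_image_singleton [Preorder L] {D : Set L} (hDne : D.Nonempty)
    (hD : DirectedOn (· ≤ ·) D) : DirectedFamily ((fun d ↦ ({d} : Set L)) '' D) := by
  refine ⟨hDne.image _, ?_, ?_⟩
  · rintro _ ⟨d, -, rfl⟩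
    exact ⟨singleton_nonempty d, finite_singleton d⟩
  · rintro _ ⟨d, hd, rfl⟩ _ ⟨e, he, rfl⟩
    obtain ⟨c, hc, hdc, hec⟩ := hD d hd e he
    refine ⟨{c}, mem_image_of_mem _ hc, ?_⟩
    simp only [upSet_singleton]
    exact subset_inter (Ici_subset_Ici.2 hdc) (Ici_subset_Ici.2 hec)

theorem iInter_upSet_image_singleton [Preorder L] (D : Set L) :
    ⋂ F ∈ (fun d ↦ ({d} : Set L)) '' D, upSet F = upperBounds D := by
  ext y
  simp [upSet_singleton, upperBounds]

theorem gzsConv_subtype_val [PartialOrder L] {D : Set L} (hDne : D.Nonempty)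
    (hD : DirectedOn (· ≤ ·) D) {s x : L} (hs : IsLUB D s) (hxs : x ≤ s) :
    GZSConv ((↑) : D → L) (dualIdeal Filter.atTop) x := by
  refine ⟨_, directedFamily_image_singleton hDne hD, ?_, ?_⟩
  · rw [iInter_upSet_image_singleton, upSet_singleton]
    exact fun y hy ↦ hxs.trans (hs.2 hy)
  · rintro _ ⟨d, hd, rfl⟩
    filter_upwards [Filter.Ici_mem_atTop ⟨d, hd⟩] with j (hdj : d ≤ (j : L))
    simpa [upSet_singleton] using hdj

theorem prop5_general {L : Type u} [PartialOrder L] (G : Set L) (x : L)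
    (h : ∀ (J : Type u) [Preorder J], IsNetIndex J →
        ∀ I : Set (Set J), IsIdeal I → (Set.univ : Set J) ∉ I →
        ∀ xj : J → L, GZSConv xj I x → {j | xj j ∉ upSet G} ∈ I) :
    WayBelowSet G x := by
  intro D hDne hD s hs hxs
  have : Nonempty D := hDne.to_subtype
  have : IsDirectedOrder D := hD.isDirectedOrder
  have hG : ∀ᶠ j : D in Filter.atTop, (j : L) ∈ upSet G := by
    simpa [dualIdeal] using h D (isNetIndex_of_isDirectedOrder D) _ (isIdeal_dualIdeal _)
      (univ_notMem_dualIdeal _) _ (gzsConv_subtype_val hDne hD hs hxs)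
  obtain ⟨j, hj⟩ := hG.exists
  exact ⟨j, j.2, hj⟩

/-- **Proposition 5.** If for every net and every nontrivial ideal, GZS-convergence to `x`
implies `{j : x_j ∉ ↑G} ∈ I`, then `G ≪ x`. -/
theorem prop5 {L : Type u} [PartialOrder L] (hL : IsDcpo L) (G : Set L)
    (hGne : G.Nonempty) (hGfin : G.Finite) (x : L)
    (h : ∀ (J : Type u) [Preorder J], IsNetIndex J →
        ∀ I : Set (Set J), IsIdeal I → (Set.univ : Set J) ∉ I →
        ∀ xj : J → L, GZSConv xj I x → {j | xj j ∉ upSet G} ∈ I) :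
    WayBelowSet G x :=
  prop5_general G x h
end
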